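/- arXiv:2504.20286 — 4 statements merged into one kernel-verified Lean document; each statement's English description precedes it below -/
import Mathlib

section
/- For every n ≥ 4, the prefix of the golden string S of length F_n equals the substring of S occupying positions F_n + 1 through 2F_n (inclusive). -/
/-!
Unfolding the recursion twice gives `gs (k+5) = gs (k+3) ++ gs (k+2) ++ gs (k+3)`, and
`gs (k+2) ++ gs (k+3) = gs (k+2) ++ gs (k+2) ++ gs (k+1)` begins with
`gs (k+3) = gs (k+2) ++ gs (k+1)` because `gs (k+1)` is a prefix of `gs (k+2)`.
So `gs (k+3) ++ gs (k+3)` is a prefix of the golden string, and `gs (k+3)` has length `F (k+4)`.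
-/

/-- The finite golden strings: `gs 1 = [B]`, `gs 2 = [B, A]`, `gs n = gs (n-1) ++ gs (n-2)`.
Here `true` denotes the letter B and `false` denotes the letter A. -/
def gs : ℕ → List Bool
  | 0 => []
  | 1 => [true]
  | 2 => [true, false]
  | (n+3) => gs (n+2) ++ gs (n+1)

/-- The `i`-th letter (1-indexed) of the infinite golden string `S`;
`true` = B, `false` = A.  Since `gs n` is a prefix of `gs (n+1)` and
`(gs (i+1)).length = F (i+2) ≥ i`, this is well-defined. -/
def goldenLetter (i : ℕ) : Bool := (gs (i+1)).getD (i-1) true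

/-- `s` is the (index set of the) Zeckendorf decomposition of `n`:
a set of indices `≥ 2`, no two adjacent, with `n = ∑_{i ∈ s} F i`. -/
def IsZeck (n : ℕ) (s : Finset ℕ) : Prop :=
  (∀ i ∈ s, 2 ≤ i) ∧ (∀ i ∈ s, i + 1 ∉ s) ∧ n = ∑ i ∈ s, Nat.fib i

/-- `c` is the coefficient function of the Chung–Graham decomposition of `n`:
`n = ∑_{i ≥ 1} c i * F (2i)` with `c i ∈ {0,1,2}` and a coefficient `0`
strictly between any two coefficients equal to `2`. -/
def IsCG (n : ℕ) (c : ℕ →₀ ℕ) : Prop :=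
  (∀ i, c i ≤ 2) ∧ c 0 = 0 ∧
  (∀ i₁ i₂, i₁ < i₂ → c i₁ = 2 → c i₂ = 2 → ∃ j, i₁ < j ∧ j < i₂ ∧ c j = 0) ∧
  n = c.sum (fun i a => a * Nat.fib (2 * i))

/-- `n` has `F (2k)` as the smallest summand of its Zeckendorf decomposition. -/
def ZeckMin (k n : ℕ) : Prop :=
  ∃ s : Finset ℕ, IsZeck n s ∧ 2 * k ∈ s ∧ ∀ i ∈ s, 2 * k ≤ i

/-- `n` has `F (2k)` or `2 F (2k)` as the smallest summand of its
Chung–Graham decomposition. -/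
def CGMin (k n : ℕ) : Prop :=
  ∃ c : ℕ →₀ ℕ, IsCG n c ∧ 1 ≤ c k ∧ ∀ i < k, c i = 0

theorem gs_length_succ : ∀ n, (gs (n+1)).length = Nat.fib (n+2)
  | 0 => rfl
  | 1 => rfl
  | (n+2) => by
      rw [show gs (n+3) = gs (n+2) ++ gs (n+1) from rfl, List.length_append,
        gs_length_succ (n+1), gs_length_succ n, Nat.fib_add_two (n := n+2)]
      ring

theorem gs_prefix_gs_succ : ∀ n, gs n <+: gs (n+1)
  | 0 => List.nil_prefix
  | 1 => ⟨[false], rfl⟩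
  | (_+2) => List.prefix_append _ _

theorem gs_prefix_gs_of_le {m n : ℕ} (h : m ≤ n) : gs m <+: gs n := by
  induction n, h using Nat.le_induction with
  | base => exact List.prefix_refl _
  | succ _ _ ih => exact ih.trans (gs_prefix_gs_succ _)

theorem gs_prefix_gs_append_gs (k : ℕ) : gs (k+3) <+: gs (k+2) ++ gs (k+3) := by
  calc gs (k+3) = gs (k+2) ++ gs (k+1) := rfl
    _ <+: gs (k+2) ++ gs (k+2) :=
      (List.prefix_append_right_inj _).mpr (gs_prefix_gs_succ (k+1))
    _ <+: gs (k+2) ++ gs (k+2) ++ gs (k+1) := List.prefix_append _ _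
    _ = gs (k+2) ++ gs (k+3) := List.append_assoc _ _ _

theorem gs_append_self_prefix (k : ℕ) : gs (k+3) ++ gs (k+3) <+: gs (k+5) := by
  have hunfold : gs (k+5) = gs (k+3) ++ (gs (k+2) ++ gs (k+3)) := by
    simp only [gs, List.append_assoc]
  rw [hunfold]
  exact (List.prefix_append_right_inj _).mpr (gs_prefix_gs_append_gs k)

theorem goldenLetter_succ_of_prefix {l : List Bool} {m i : ℕ} (hl : l <+: gs m)
    (hi : i < l.length) : goldenLetter (i+1) = l[i] := by
  have hi' : i < (gs (i+2)).length := by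
    have := Nat.le_fib_add_one (i+2)
    rw [gs_length_succ]
    linarith [Nat.fib_le_fib_succ (n := i+2)]
  have hl' := hl.trans (gs_prefix_gs_of_le (le_max_right (i+2) m))
  rw [goldenLetter, Nat.add_sub_cancel, List.getD_eq_getElem _ _ hi',
    (gs_prefix_gs_of_le (le_max_left (i+2) m)).getElem hi', hl'.getElem hi]

theorem golden_repeat_block (n : ℕ) (hn : 4 ≤ n) :
    ∀ i : ℕ, 1 ≤ i → i ≤ Nat.fib n →
      goldenLetter (Nat.fib n + i) = goldenLetter i := by
  obtain ⟨k, rfl⟩ : ∃ k, n = k + 4 := ⟨n - 4, by omega⟩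
  intro i hi1 hi2
  obtain ⟨j, rfl⟩ : ∃ j, i = j + 1 := ⟨i - 1, by omega⟩
  have hlen : (gs (k+3)).length = Nat.fib (k+4) := gs_length_succ (k+2)
  have hj : j < (gs (k+3)).length := by omega
  calc goldenLetter (Nat.fib (k+4) + (j+1))
      = goldenLetter (j + (gs (k+3)).length + 1) := by rw [hlen]; ring_nf
    _ = (gs (k+3) ++ gs (k+3))[j + (gs (k+3)).length]'(by rw [List.length_append]; omega) :=
        goldenLetter_succ_of_prefix (gs_append_self_prefix k) _
    _ = (gs (k+3))[j] := (List.getElem_append_right' _ hj).symm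
    _ = goldenLetter (j+1) := (goldenLetter_succ_of_prefix (List.prefix_refl _) hj).symm
end

section
/- For every n ≥ 2, the 2F_{2n+1}-th letter of the golden string S is A, and the (F_{2n+1} − 1)-th letter of S is B. -/
/-!
Since `gs (m+3) = gs (m+2) ++ gs (m+1)` and `gs (m+2)` is a prefix of `S` of length `F (m+3)`,
the letter of `S` at position `F (m+3) + j` equals the one at position `j` for `1 ≤ j ≤ F (m+2)`.
Taking `j = F (m+2)` and `j = F (m+2) - 1` shows that the letters at positions `F (2k+3)` and
`F (2k+3) - 1` do not depend on `k`, so they are `A` and `B` as for `k = 0`. The first claim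
reduces to this through `2 F (2n+1) = F (2n+2) + F (2n-1)`.
-/

theorem List.IsPrefix.getD_eq {α : Type*} {l₁ l₂ : List α} (h : l₁ <+: l₂) {i : ℕ}
    (hi : i < l₁.length) (d : α) : l₁.getD i d = l₂.getD i d := by
  rw [List.getD_eq_getElem _ _ hi, List.getD_eq_getElem _ _ (hi.trans_le h.length_le),
    h.getElem hi]

theorem gs_add_three (m : ℕ) : gs (m + 3) = gs (m + 2) ++ gs (m + 1) := rfl

theorem gs_length : ∀ m, (gs (m + 1)).length = Nat.fib (m + 2)
  | 0 => rfl
  | 1 => rfl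
  | m + 2 => by
    rw [gs_add_three, List.length_append, gs_length (m + 1), gs_length m, add_comm,
      ← Nat.fib_add_two]

theorem gs_prefix_succ : ∀ m, gs m <+: gs (m + 1)
  | 0 => List.nil_prefix
  | 1 => ⟨[false], rfl⟩
  | _ + 2 => List.prefix_append _ _

theorem gs_prefix_of_le {m k : ℕ} (h : m ≤ k) : gs m <+: gs k :=
  Nat.le_induction (List.prefix_refl _) (fun k _ ih => ih.trans (gs_prefix_succ k)) k h

theorem lt_length_gs (i : ℕ) : i < (gs (i + 2)).length := by
  have h₁ : i + 2 ≤ Nat.fib (i + 2) + 1 := Nat.le_fib_add_one (i + 2)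
  have h₂ : Nat.fib (i + 2) ≤ Nat.fib (i + 3) := Nat.fib_le_fib_succ
  have hlen : (gs (i + 2)).length = Nat.fib (i + 3) := gs_length (i + 1)
  omega

theorem goldenLetter_succ_eq_getD {m i : ℕ} (hi : i < (gs m).length) :
    goldenLetter (i + 1) = (gs m).getD i true := by
  rw [goldenLetter, Nat.add_sub_cancel,
    (gs_prefix_of_le (le_max_right m (i + 2))).getD_eq (lt_length_gs i),
    (gs_prefix_of_le (le_max_left m (i + 2))).getD_eq hi]

theorem goldenLetter_fib_add (m : ℕ) {j : ℕ} (hj : j < Nat.fib (m + 2)) :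
    goldenLetter (Nat.fib (m + 3) + j + 1) = goldenLetter (j + 1) := by
  have hj' : j < (gs (m + 1)).length := by rwa [gs_length]
  have hlen : (gs (m + 2)).length = Nat.fib (m + 3) := gs_length (m + 1)
  rw [goldenLetter_succ_eq_getD (m := m + 3) (by simp [gs_add_three, hlen, hj']),
    goldenLetter_succ_eq_getD hj', gs_add_three,
    List.getD_append_right _ _ _ _ (by omega), hlen, Nat.add_sub_cancel_left]

theorem goldenLetter_fib_add_four (m : ℕ) :
    goldenLetter (Nat.fib (m + 4)) = goldenLetter (Nat.fib (m + 2)) := by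
  have hrec : Nat.fib (m + 4) = Nat.fib (m + 2) + Nat.fib (m + 3) := Nat.fib_add_two
  have hpos : 0 < Nat.fib (m + 2) := Nat.fib_pos.mpr (by omega)
  have := goldenLetter_fib_add m (j := Nat.fib (m + 2) - 1) (by omega)
  rwa [Nat.sub_add_cancel hpos, add_assoc, Nat.sub_add_cancel hpos, add_comm, ← hrec] at this

theorem goldenLetter_fib_add_four_sub_one {m : ℕ} (hm : 1 ≤ m) :
    goldenLetter (Nat.fib (m + 4) - 1) = goldenLetter (Nat.fib (m + 2) - 1) := by
  have hrec : Nat.fib (m + 4) = Nat.fib (m + 2) + Nat.fib (m + 3) := Nat.fib_add_two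
  have htwo : 2 ≤ Nat.fib (m + 2) := Nat.fib_mono (show 3 ≤ m + 2 by omega)
  have := goldenLetter_fib_add m (j := Nat.fib (m + 2) - 2) (by omega)
  rwa [show Nat.fib (m + 3) + (Nat.fib (m + 2) - 2) + 1 = Nat.fib (m + 4) - 1 by omega,
    show Nat.fib (m + 2) - 2 + 1 = Nat.fib (m + 2) - 1 by omega] at this

theorem goldenLetter_fib_odd (k : ℕ) : goldenLetter (Nat.fib (2 * k + 3)) = false := by
  induction k with
  | zero => rfl
  | succ k ih => exact (goldenLetter_fib_add_four (2 * k + 1)).trans ih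

theorem goldenLetter_fib_odd_sub_one (k : ℕ) :
    goldenLetter (Nat.fib (2 * k + 3) - 1) = true := by
  induction k with
  | zero => rfl
  | succ k ih => exact (goldenLetter_fib_add_four_sub_one (m := 2 * k + 1) (by omega)).trans ih

theorem golden_special_positions (n : ℕ) (hn : 2 ≤ n) :
    goldenLetter (2 * Nat.fib (2 * n + 1)) = false ∧
      goldenLetter (Nat.fib (2 * n + 1) - 1) = true := by
  obtain ⟨k, rfl⟩ : ∃ k, n = k + 2 := ⟨n - 2, by omega⟩
  refine ⟨?_, goldenLetter_fib_odd_sub_one (k + 1)⟩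
  have e₅ : Nat.fib (2 * k + 5) = Nat.fib (2 * k + 3) + Nat.fib (2 * k + 4) := Nat.fib_add_two
  have e₆ : Nat.fib (2 * k + 6) = Nat.fib (2 * k + 4) + Nat.fib (2 * k + 5) := Nat.fib_add_two
  have hpos : 0 < Nat.fib (2 * k + 3) := Nat.fib_pos.mpr (by omega)
  have hj : Nat.fib (2 * k + 3) - 1 < Nat.fib (2 * k + 5) := by omega
  calc goldenLetter (2 * Nat.fib (2 * (k + 2) + 1))
      = goldenLetter (Nat.fib (2 * k + 6) + (Nat.fib (2 * k + 3) - 1) + 1) := by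
        congr 1; change 2 * Nat.fib (2 * k + 5) = _; omega
    _ = goldenLetter (Nat.fib (2 * k + 3)) := by
        rw [goldenLetter_fib_add (2 * k + 3) hj, Nat.sub_add_cancel hpos]
    _ = false := goldenLetter_fib_odd k
end

section
/- Fix k ≥ 1 and let p(j) be the j-th smallest positive integer whose Zeckendorf decomposition has F_{2k} as its smallest summand. Then for all j ≥ 1, p(j+1) − p(j) = F_{2k+1} if the j-th letter of the golden string S is A, and p(j+1) − p(j) = F_{2k+2} if the j-th letter of S is B. -/
open List

namespace List

theorem IsZeckendorfRep.pairwise {l : List ℕ} (h : l.IsZeckendorfRep) :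
    (l ++ [0]).Pairwise fun a b => b + 2 ≤ a :=
  letI : Trans (fun a b : ℕ => b + 2 ≤ a) (fun a b => b + 2 ≤ a) (fun a b => b + 2 ≤ a) :=
    ⟨fun hab hbc => by omega⟩
  IsChain.pairwise h

theorem isZeckendorfRep_map_add_append_iff {l : List ℕ} {d : ℕ} (hd : 2 ≤ d) :
    (l.map (· + d) ++ [d]).IsZeckendorfRep ↔ l.IsZeckendorfRep := by
  have hl : l.map (· + d) ++ [d] = (l ++ [0]).map (· + d) := by simp
  have hR : (fun a b : ℕ => b + d + 2 ≤ a + d) = fun a b => b + 2 ≤ a := by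
    funext a b
    simp only [eq_iff_iff]
    omega
  rw [IsZeckendorfRep, hl, isChain_append, isChain_map, IsZeckendorfRep]
  simp [hR, hd]

end List

namespace Nat

theorem nth_eq_of_strictMono {p : ℕ → Prop} {f : ℕ → ℕ} (hf : StrictMono f)
    (hp : ∀ n, p n ↔ ∃ j, f j = n) : nth p = f := by
  have hrange : Set.ofPred p = Set.range f := Set.ext hp
  have hinf : (Set.ofPred p).Infinite := hrange ▸ Set.infinite_range_of_injective hf.injective
  funext j
  refine (eq_nth_of_strictMonoOn_of_mapsTo_of_surjOn f ?_ ?_ (hf.strictMonoOn _) ?_).symm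
  · intro n hn
    obtain ⟨j, rfl⟩ := (hp n).1 hn
    exact ⟨j, fun hfin => absurd hfin hinf, rfl⟩
  · exact fun j _ => (hp _).2 ⟨j, rfl⟩
  · exact fun hfin => absurd hfin hinf

theorem zeckendorf_fib_add {m x : ℕ} (hx : x < fib m) :
    zeckendorf (fib (m + 1) + x) = (m + 1) :: zeckendorf x := by
  have hg : greatestFib (fib (m + 1) + x) = m + 1 := by
    refine le_antisymm (Nat.lt_succ_iff.1 (greatestFib_lt.2 ?_)) (le_greatestFib.2 le_self_add)
    rw [fib_add_two]
    omega
  rw [zeckendorf_of_pos (fib_pos.2 m.succ_pos |>.trans_le le_self_add), hg,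
    Nat.add_sub_cancel_left]

theorem exists_eq_fib_add {n : ℕ} (hn : 0 < n) : ∃ m x, x < fib m ∧ n = fib (m + 1) + x := by
  obtain ⟨m, hm⟩ := exists_eq_add_one.2 (greatestFib_pos.2 hn)
  have hlt := lt_fib_greatestFib_add_one n
  have hle := fib_greatestFib_le n
  rw [hm, fib_add_two] at hlt
  rw [hm] at hle
  exact ⟨m, n - fib (m + 1), by omega, by omega⟩

-- The smallest Zeckendorf index (`Nat.zeckendorf` lists indices in decreasing order);
-- `0` for `n = 0`.
def zeckendorfLast (n : ℕ) : ℕ := (zeckendorf n).getLastD 0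

theorem zeckendorfLast_fib_add {m x : ℕ} (hx0 : 0 < x) (hx : x < fib m) :
    zeckendorfLast (fib (m + 1) + x) = zeckendorfLast x := by
  rw [zeckendorfLast, zeckendorf_fib_add hx, getLastD_cons, zeckendorfLast, zeckendorf_of_pos hx0,
    getLastD_cons, getLastD_cons]

theorem zeckendorfLast_fib {m : ℕ} (hm : 2 ≤ m) : zeckendorfLast (fib m) = m := by
  obtain ⟨m, rfl⟩ := exists_add_of_le hm
  have := zeckendorf_fib_add (m := m + 1) (x := 0) (fib_pos.2 m.succ_pos)
  rw [add_zero] at this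
  rw [zeckendorfLast, add_comm, this, zeckendorf_zero, getLastD_cons, getLastD_nil]

theorem even_zeckendorfLast_fib_add_iff {m r : ℕ} (hm : 1 ≤ m) (hr0 : 0 < r)
    (hr : r ≤ fib (m + 1)) :
    Even (zeckendorfLast (fib (m + 2) + r)) ↔ Even (zeckendorfLast r) := by
  rcases hr.lt_or_eq with hr | rfl
  · rw [zeckendorfLast_fib_add hr0 hr]
  · rw [add_comm, ← fib_add_two, zeckendorfLast_fib (by omega), zeckendorfLast_fib (by omega)]
    simp [parity_simps]

theorem zeckendorfLast_eq_iff {n d : ℕ} (hd : d ≠ 0) :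
    zeckendorfLast n = d ↔ d ∈ zeckendorf n ∧ ∀ i ∈ zeckendorf n, d ≤ i := by
  rcases (zeckendorf n).eq_nil_or_concat' with h | ⟨L, a, h⟩
  · simp [zeckendorfLast, h, hd.symm]
  have hL : ∀ x ∈ L, a + 2 ≤ x := by
    have hp := (isZeckendorfRep_zeckendorf n).pairwise
    rw [h, append_assoc, pairwise_append] at hp
    exact fun x hx => hp.2.2 x hx a (by simp)
  rw [zeckendorfLast, h, getLastD_concat]
  constructor
  · rintro rfl
    refine ⟨by simp, fun i hi => ?_⟩
    rcases mem_append.1 hi with hi | hi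
    · exact (hL i hi).trans' (by omega)
    · exact (mem_singleton.1 hi).ge
  · rintro ⟨hmem, hmin⟩
    have had := hmin a (by simp)
    rcases mem_append.1 hmem with hdL | hda
    · have := hL d hdL
      omega
    · exact (mem_singleton.1 hda).symm

def zeckendorfShift (d n : ℕ) : ℕ := ((zeckendorf n).map fun i => fib (i + d)).sum

theorem zeckendorfShift_fib_add {d m x : ℕ} (hx : x < fib m) :
    zeckendorfShift d (fib (m + 1) + x) = fib (m + 1 + d) + zeckendorfShift d x := by
  rw [zeckendorfShift, zeckendorfShift, zeckendorf_fib_add hx, map_cons, sum_cons]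

theorem zeckendorfShift_fib_sub_one (d : ℕ) : ∀ m,
    zeckendorfShift d (fib (m + 1) - 1) + (if Even (m + 1) then fib (d + 2) else fib (d + 1)) =
      fib (m + 1 + d)
  | 0 => by simp [zeckendorfShift, add_comm]
  | 1 => by simp [zeckendorfShift, add_comm]
  | m + 2 => by
    have hpos : 0 < fib (m + 1) := fib_pos.2 m.succ_pos
    have hsplit : fib (m + 3) - 1 = fib (m + 2) + (fib (m + 1) - 1) := by
      have : fib (m + 3) = fib (m + 1) + fib (m + 2) := fib_add_two
      omega
    have hpar : Even (m + 2 + 1) ↔ Even (m + 1) := by simp [parity_simps]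
    rw [hsplit, zeckendorfShift_fib_add (by omega), add_assoc]
    simp only [hpar]
    rw [zeckendorfShift_fib_sub_one d m, show m + 2 + 1 + d = (m + 1 + d) + 2 by omega, fib_add_two]
    ring_nf

theorem zeckendorfShift_succ (d n : ℕ) :
    zeckendorfShift d (n + 1) =
      zeckendorfShift d n + if Even (zeckendorfLast (n + 1)) then fib (d + 2) else fib (d + 1) := by
  induction n using Nat.strong_induction_on with | _ n ih =>
  obtain ⟨m, x, hx, hn⟩ := exists_eq_fib_add (Nat.add_one_pos n)
  have hpos : 0 < fib (m + 1) := fib_pos.2 m.succ_pos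
  rcases Nat.eq_zero_or_pos x with rfl | hx0
  · have hshift : zeckendorfShift d (fib (m + 1)) = fib (m + 1 + d) := by
      simpa [zeckendorfShift] using zeckendorfShift_fib_add (d := d) hx
    obtain rfl : n = fib (m + 1) - 1 := by omega
    rw [hn, add_zero, zeckendorfLast_fib (by have := fib_pos.1 hx; omega), hshift,
      zeckendorfShift_fib_sub_one]
  · obtain ⟨x, rfl⟩ : ∃ x', x = x' + 1 := ⟨x - 1, by omega⟩
    obtain rfl : n = fib (m + 1) + x := by omega
    rw [add_assoc, zeckendorfShift_fib_add hx, zeckendorfShift_fib_add (by omega),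
      zeckendorfLast_fib_add hx0 hx, ih x (by omega), ← add_assoc]

theorem zeckendorfShift_strictMono (d : ℕ) : StrictMono (zeckendorfShift d) :=
  strictMono_nat_of_lt_succ fun n => by
    rw [zeckendorfShift_succ]
    split_ifs <;> simp [fib_pos]

theorem zeckendorf_fib_add_zeckendorfShift {d : ℕ} (hd : 2 ≤ d) (n : ℕ) :
    zeckendorf (fib d + zeckendorfShift d n) = (zeckendorf n).map (· + d) ++ [d] := by
  have hrep := (isZeckendorfRep_map_add_append_iff hd).2 (isZeckendorfRep_zeckendorf n)
  convert zeckendorf_sum_fib hrep using 2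
  simp [zeckendorfShift, add_comm, Function.comp_def]

theorem zeckendorfLast_eq_iff_exists {d n : ℕ} (hd : 2 ≤ d) :
    zeckendorfLast n = d ↔ ∃ j, fib d + zeckendorfShift d j = n := by
  refine ⟨fun h => ?_, ?_⟩
  · obtain ⟨L, hL⟩ : ∃ L, zeckendorf n = L ++ [d] := by
      rcases (zeckendorf n).eq_nil_or_concat' with h' | ⟨L, a, h'⟩
      · simp [zeckendorfLast, h'] at h
        omega
      · rw [zeckendorfLast, h', getLastD_concat] at h
        exact ⟨L, h ▸ h'⟩
    have hLd : ∀ x ∈ L, d ≤ x := by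
      have hp := (isZeckendorfRep_zeckendorf n).pairwise
      rw [hL, append_assoc, pairwise_append] at hp
      exact fun x hx => (hp.2.2 x hx d (by simp)).trans' (by omega)
    have hLL : (L.map (· - d)).map (· + d) = L := by
      rw [map_map]
      exact (map_congr_left fun x hx => Nat.sub_add_cancel (hLd x hx)).trans (map_id L)
    have hrep : (L.map (· - d)).IsZeckendorfRep := by
      rw [← isZeckendorfRep_map_add_append_iff hd, hLL, ← hL]
      exact isZeckendorfRep_zeckendorf n
    refine ⟨((L.map (· - d)).map fib).sum, ?_⟩
    have h := zeckendorf_fib_add_zeckendorfShift hd ((L.map (· - d)).map fib).sum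
    rw [zeckendorf_sum_fib hrep, hLL, ← hL] at h
    rw [← sum_zeckendorf_fib (fib d + _), h, sum_zeckendorf_fib]
  · rintro ⟨j, rfl⟩
    rw [zeckendorfLast, zeckendorf_fib_add_zeckendorfShift hd, getLastD_concat]

theorem nth_zeckendorfLast_eq {d : ℕ} (hd : 2 ≤ d) :
    nth (fun n => zeckendorfLast n = d) = fun j => fib d + zeckendorfShift d j :=
  nth_eq_of_strictMono (fun _ _ h => Nat.add_lt_add_left (zeckendorfShift_strictMono d h) _)
    fun _ => zeckendorfLast_eq_iff_exists hd

end Nat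

open Nat

theorem isZeck_zeckendorf (n : ℕ) : IsZeck n (zeckendorf n).toFinset := by
  have hp := (isZeckendorfRep_zeckendorf n).pairwise
  rw [pairwise_append] at hp
  obtain ⟨hp, -, h0⟩ := hp
  refine ⟨fun i hi => by simpa using h0 i (mem_toFinset.1 hi) 0 (mem_singleton_self 0),
    fun i hi hi1 => ?_, ?_⟩
  · have : Std.Symm fun a b : ℕ => a ≠ b + 1 ∧ b ≠ a + 1 := ⟨fun _ _ h => h.symm⟩
    have hsep := (hp.imp (S := fun a b : ℕ => a ≠ b + 1 ∧ b ≠ a + 1) (by omega)).forall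
      (mem_toFinset.1 hi1) (mem_toFinset.1 hi) (by omega)
    exact hsep.1 rfl
  · rw [sum_toFinset _ (hp.imp (by omega)), sum_zeckendorf_fib]

theorem IsZeck.eq_toFinset_zeckendorf {n : ℕ} {s : Finset ℕ} (h : IsZeck n s) :
    s = (zeckendorf n).toFinset := by
  obtain ⟨h2, hsep, rfl⟩ := h
  have hrep : (s.sort (· ≥ ·)).IsZeckendorfRep := by
    refine (pairwise_append.2 ⟨?_, pairwise_singleton _ _, ?_⟩).isChain
    · refine (Finset.sortedGT_sort s).pairwise.imp_of_mem fun {a b} ha hb hab => ?_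
      rw [Finset.mem_sort _] at ha hb
      by_contra hlt
      obtain rfl : a = b + 1 := by omega
      exact hsep b hb ha
    · intro a ha b hb
      rw [mem_singleton] at hb
      simpa [hb] using h2 a ((Finset.mem_sort _).1 ha)
  have hsum : ((s.sort (· ≥ ·)).map fib).sum = ∑ i ∈ s, fib i := by
    rw [← sum_toFinset _ (Finset.sort_nodup _ _), Finset.sort_toFinset]
  rw [← hsum, zeckendorf_sum_fib hrep, Finset.sort_toFinset]

theorem isZeck_iff {n : ℕ} {s : Finset ℕ} : IsZeck n s ↔ s = (zeckendorf n).toFinset :=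
  ⟨IsZeck.eq_toFinset_zeckendorf, by rintro rfl; exact isZeck_zeckendorf n⟩

theorem zeckMin_iff {k n : ℕ} (hk : 1 ≤ k) : ZeckMin k n ↔ zeckendorfLast n = 2 * k := by
  rw [zeckendorfLast_eq_iff (by omega)]
  simp [ZeckMin, isZeck_iff]

theorem nth_zeckMin {k : ℕ} (hk : 1 ≤ k) (j : ℕ) :
    nth (ZeckMin k) j = fib (2 * k) + zeckendorfShift (2 * k) j := by
  have hZ : ZeckMin k = fun n => zeckendorfLast n = 2 * k :=
    funext fun _ => propext (zeckMin_iff hk)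
  rw [hZ, nth_zeckendorfLast_eq (by omega)]

theorem gs_eq_map (n : ℕ) :
    gs (n + 1) = (range' 1 (fib (n + 2))).map fun j => decide (Even (zeckendorfLast j)) := by
  induction n using Nat.twoStepInduction with
  | zero =>
    have h1 : zeckendorfLast 1 = 2 := zeckendorfLast_fib (m := 2) le_rfl
    simp [gs, h1]
  | one =>
    have h1 : zeckendorfLast 1 = 2 := zeckendorfLast_fib (m := 2) le_rfl
    have h2 : zeckendorfLast 2 = 3 := zeckendorfLast_fib (m := 3) (by omega)
    simp [gs, h1, h2, fib_add_two, range'_succ]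
    decide
  | more n ih₀ ih₁ =>
    have hsplit : range' 1 (fib (n + 4)) =
        range' 1 (fib (n + 3)) ++ (range' 1 (fib (n + 2))).map (fib (n + 3) + ·) := by
      rw [map_add_range', add_comm _ 1, range'_append_1, fib_add_two (n := n + 2),
        add_comm (fib (n + 2))]
    rw [gs, ih₁, ih₀, hsplit, map_append, map_map]
    congr 1
    refine map_congr_left fun r hr => ?_
    rw [mem_range'_1] at hr
    have hr' : r ≤ fib (n + 2) := by omega
    simpa using (even_zeckendorfLast_fib_add_iff (m := n + 1) (by omega) (by omega) hr').symm

theorem goldenLetter_eq {j : ℕ} (hj : 1 ≤ j) :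
    goldenLetter j = decide (Even (zeckendorfLast j)) := by
  have hlen : j - 1 < fib (j + 2) := by
    have := le_fib_add_one (j + 2)
    omega
  rw [goldenLetter, gs_eq_map, getD_eq_getElem _ _ (by simpa using hlen), getElem_map,
    getElem_range', Nat.one_mul, Nat.add_sub_cancel' hj]

theorem zeck_gap (k : ℕ) (hk : 1 ≤ k) (j : ℕ) (hj : 1 ≤ j) :
    (goldenLetter j = false →
        Nat.nth (ZeckMin k) (j + 1 - 1) - Nat.nth (ZeckMin k) (j - 1) =
          Nat.fib (2 * k + 1)) ∧
    (goldenLetter j = true →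
        Nat.nth (ZeckMin k) (j + 1 - 1) - Nat.nth (ZeckMin k) (j - 1) =
          Nat.fib (2 * k + 2)) := by
  obtain ⟨i, rfl⟩ : ∃ i, j = i + 1 := ⟨j - 1, by omega⟩
  rw [goldenLetter_eq hj, Nat.add_sub_cancel, Nat.add_sub_cancel, nth_zeckMin hk, nth_zeckMin hk,
    zeckendorfShift_succ]
  by_cases h : Even (zeckendorfLast (i + 1)) <;> simp [h] <;> omega
end

section
/- For all j ≥ 1, the position of the j-th occurrence of the letter B in the golden string S equals ⌊jφ⌋, where φ = (1+√5)/2. -/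
/-!
The golden string is the fixed point of the substitution `σ : B ↦ BA, A ↦ B`, since
`gs (n + 2) = σ (gs (n + 1))`. The word whose `p`-th letter is `B` exactly when
`⌊p/φ⌋ < ⌊(p + 1)/φ⌋`, i.e. when `p = ⌊jφ⌋` for some `j`, is a fixed point of `σ` as well:
`σ` maps its prefix of length `L` onto its prefix of length `L + ⌊(L + 1)/φ⌋`.
This rests on one estimate. Since `1/φ = φ - 1` is irrational, `m = ⌊(n + 1)φ⌋ = n + 1 + ⌊(n + 1)/φ⌋`
satisfies `m/φ = n + 1 - {(n + 1)/φ}/φ ∈ (n, n + 1)`, so `⌊m/φ⌋ = n` and `⌊(m + 1)/φ⌋ = n + 1`: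
the letter at `m` is a `B`, preceded by exactly `n` others.
-/

open Real goldenRatio

def goldenSubst (l : List Bool) : List Bool :=
  l.flatMap fun b => if b then [true, false] else [true]

theorem gs_add_two : ∀ n, gs (n + 2) = goldenSubst (gs (n + 1))
  | 0 => rfl
  | 1 => rfl
  | n + 2 =>
    calc gs (n + 4) = gs (n + 3) ++ gs (n + 2) := rfl
      _ = goldenSubst (gs (n + 2)) ++ goldenSubst (gs (n + 1)) :=
        congrArg₂ (· ++ ·) (gs_add_two (n + 1)) (gs_add_two n)
      _ = goldenSubst (gs (n + 3)) := (List.flatMap_append ..).symm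

theorem le_length_gs : ∀ n, n ≤ (gs n).length
  | 0 => le_rfl
  | 1 => le_rfl
  | 2 => le_rfl
  | n + 3 => by
    have := le_length_gs (n + 2)
    have := le_length_gs (n + 1)
    simp only [gs, List.length_append]
    omega

-- `beattyCount n` is the number of `j ≥ 1` with `⌊jφ⌋ < n`.
noncomputable def beattyCount (n : ℕ) : ℕ := ⌊(n : ℝ) * φ⁻¹⌋₊

noncomputable def beattyLetter (p : ℕ) : Bool := decide (beattyCount p < beattyCount (p + 1))

noncomputable def beattyWord (L : ℕ) : List Bool :=
  (List.range L).map fun i => beattyLetter (i + 1)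

theorem inv_goldenRatio_sq : φ⁻¹ ^ 2 = 1 - φ⁻¹ := by
  rw [inv_goldenRatio, neg_sq, goldenConj_sq]; ring

theorem inv_goldenRatio_lt_one : φ⁻¹ < 1 := inv_lt_one_of_one_lt₀ one_lt_goldenRatio

theorem beattyCount_one : beattyCount 1 = 0 := by
  rw [beattyCount, Nat.cast_one, one_mul, Nat.floor_eq_zero]
  exact inv_goldenRatio_lt_one

theorem beattyCount_le_succ (n : ℕ) : beattyCount n ≤ beattyCount (n + 1) :=
  Nat.floor_le_floor (by gcongr; simp)

theorem beattyCount_succ_le (n : ℕ) : beattyCount (n + 1) ≤ beattyCount n + 1 := by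
  rw [beattyCount, beattyCount, ← Nat.floor_add_one (by positivity)]
  exact Nat.floor_le_floor (by push_cast; nlinarith [inv_goldenRatio_lt_one])

theorem beattyCount_succ_of_beattyLetter_true {p : ℕ} (h : beattyLetter p = true) :
    beattyCount (p + 1) = beattyCount p + 1 :=
  le_antisymm (beattyCount_succ_le p) (by simpa [beattyLetter] using h)

theorem beattyCount_succ_of_beattyLetter_false {p : ℕ} (h : beattyLetter p = false) :
    beattyCount (p + 1) = beattyCount p :=
  le_antisymm (by simpa [beattyLetter] using h) (beattyCount_le_succ p)

-- `n + beattyCount (n + 1) + 1 = ⌊(n + 1)φ⌋`, see `floor_natCast_mul_goldenRatio`.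
theorem beattyCount_wythoff (n : ℕ) :
    beattyCount (n + beattyCount (n + 1) + 1) = n ∧
      beattyCount (n + beattyCount (n + 1) + 2) = n + 1 := by
  set x : ℝ := ((n + 1 : ℕ) : ℝ) * φ⁻¹
  set k := ⌊x⌋₊
  have hι₀ : 0 < φ⁻¹ := inv_pos.mpr goldenRatio_pos
  have hι₁ := inv_goldenRatio_lt_one
  have hx : 0 ≤ x := by positivity
  have hkx : (k : ℝ) < x := (Nat.floor_le hx).lt_of_ne
    ((goldenRatio_irrational.inv.natCast_mul (Nat.succ_ne_zero n)).ne_nat k).symm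
  have hxk : x < k + 1 := Nat.lt_floor_add_one x
  have hmul : ((n + k + 1 : ℕ) : ℝ) * φ⁻¹ = (n + 1) - (x - k) * φ⁻¹ := by
    simp only [x]; push_cast; linear_combination (↑n + 1) * inv_goldenRatio_sq
  change beattyCount (n + k + 1) = n ∧ beattyCount (n + k + 1 + 1) = n + 1
  constructor
  · rw [beattyCount, Nat.floor_eq_iff (by positivity), hmul]
    constructor <;> nlinarith
  · rw [beattyCount, Nat.floor_eq_iff (by positivity), Nat.cast_succ (n + k + 1), add_mul, hmul]
    push_cast
    constructor <;> nlinarith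

theorem beattyLetter_wythoff (n : ℕ) : beattyLetter (n + beattyCount (n + 1) + 1) = true := by
  obtain ⟨h₁, h₂⟩ := beattyCount_wythoff n
  simp [beattyLetter, h₁, h₂]

theorem beattyLetter_wythoff_succ {n : ℕ} (h : beattyLetter (n + 1) = true) :
    beattyLetter (n + beattyCount (n + 1) + 2) = false := by
  have h₂ := (beattyCount_wythoff n).2
  have h₃ := (beattyCount_wythoff (n + 1)).1
  rw [beattyCount_succ_of_beattyLetter_true h, show n + 1 + (beattyCount (n + 1) + 1) + 1 =
    n + beattyCount (n + 1) + 2 + 1 by omega] at h₃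
  simp [beattyLetter, h₂, h₃]

theorem length_beattyWord (L : ℕ) : (beattyWord L).length = L := by
  simp [beattyWord]

theorem beattyWord_succ (L : ℕ) : beattyWord (L + 1) = beattyWord L ++ [beattyLetter (L + 1)] := by
  simp [beattyWord, List.range_succ]

theorem goldenSubst_beattyWord (L : ℕ) :
    goldenSubst (beattyWord L) = beattyWord (L + beattyCount (L + 1)) := by
  induction L with
  | zero => rw [zero_add, beattyCount_one]; rfl
  | succ L ih =>
    rw [beattyWord_succ, goldenSubst, List.flatMap_append, ← goldenSubst, ih]
    cases h : beattyLetter (L + 1)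
    · rw [beattyCount_succ_of_beattyLetter_false h, show L + 1 + beattyCount (L + 1) =
        L + beattyCount (L + 1) + 1 by omega, beattyWord_succ, beattyLetter_wythoff]
      rfl
    · rw [beattyCount_succ_of_beattyLetter_true h, show L + 1 + (beattyCount (L + 1) + 1) =
        L + beattyCount (L + 1) + 1 + 1 by omega, beattyWord_succ, beattyWord_succ,
        beattyLetter_wythoff, beattyLetter_wythoff_succ h]
      simp

theorem gs_eq_beattyWord : ∀ n, gs (n + 1) = beattyWord (gs (n + 1)).length
  | 0 => by
    have h := beattyLetter_wythoff 0
    rw [beattyCount_one] at h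
    simp [gs, beattyWord, h]
  | n + 1 => by
    obtain ⟨L, hL⟩ : ∃ L, gs (n + 2) = beattyWord L :=
      ⟨_, by rw [gs_add_two, gs_eq_beattyWord n, goldenSubst_beattyWord]⟩
    rw [hL, length_beattyWord]

theorem goldenLetter_eq_beattyLetter {i : ℕ} (hi : 1 ≤ i) : goldenLetter i = beattyLetter i := by
  have hlen := le_length_gs (i + 1)
  rw [goldenLetter, gs_eq_beattyWord i,
    List.getD_eq_getElem _ _ (by rw [length_beattyWord]; omega)]
  simp [beattyWord, Nat.sub_add_cancel hi]

theorem count_goldenLetter (m : ℕ) :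
    Nat.count (fun i => 1 ≤ i ∧ goldenLetter i = true) m = beattyCount m := by
  induction m with
  | zero => simp [beattyCount]
  | succ m ih =>
    rw [Nat.count_succ, ih]
    rcases Nat.eq_zero_or_pos m with rfl | hm
    · rw [beattyCount_one]
      simp [beattyCount]
    · simp only [goldenLetter_eq_beattyLetter hm]
      cases h : beattyLetter m
      · simp [beattyCount_succ_of_beattyLetter_false h]
      · simp [beattyCount_succ_of_beattyLetter_true h, hm.ne']

theorem floor_natCast_mul_goldenRatio (n : ℕ) : ⌊(n : ℝ) * φ⌋ = n + beattyCount n := by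
  rw [beattyCount, Int.natCast_floor_eq_floor (by positivity), ← Int.floor_natCast_add,
    inv_goldenRatio]
  congr 1
  linear_combination (n : ℝ) * goldenRatio_add_goldenConj

theorem nth_B_position (j : ℕ) (hj : 1 ≤ j) :
    ((Nat.nth (fun i => 1 ≤ i ∧ goldenLetter i = true) (j - 1) : ℤ)) =
      ⌊(j : ℝ) * ((1 + Real.sqrt 5) / 2)⌋ := by
  obtain ⟨n, rfl⟩ := Nat.exists_eq_add_of_le' hj
  set m := n + beattyCount (n + 1) + 1
  have hB : 1 ≤ m ∧ goldenLetter m = true :=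
    ⟨by omega, by rw [goldenLetter_eq_beattyLetter (by omega), beattyLetter_wythoff]⟩
  have hnth := Nat.nth_count (p := fun i => 1 ≤ i ∧ goldenLetter i = true) hB
  rw [count_goldenLetter, (beattyCount_wythoff n).1] at hnth
  rw [Nat.add_sub_cancel, hnth]
  change (m : ℤ) = ⌊((n + 1 : ℕ) : ℝ) * φ⌋
  rw [floor_natCast_mul_goldenRatio]
  omega
end
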